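/- arXiv:1611.06325 — 3 statements merged into one kernel-verified Lean document; each statement's English description precedes it below -/
import Mathlib

section
/- Let Λ be a finite-dimensional algebra with subalgebras L, kG, R such that the product map L ⊗ kG ⊗ R → Λ is a bijection, A := L·kG and B := kG·R are subalgebras, L and R are augmented with nilpotent augmentation ideals L⁺, R⁺, and (kG)L⁺ = L⁺(kG), R⁺(kG) = (kG)R⁺. For λ, μ ∈ Ĝ, let k_A(λ) be the right A-module and k_B(μ) the left B-module obtained from the characters via A/(L⁺⊗kG) = kG = B/(kG⊗R⁺). Then k_A(λ) ⊗_A Λ ⊗_B k_B(μ) is one-dimensional if λ = μ and zero if λ ≠ μ. -/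
open TensorProduct
open scoped Classical

/-- The product map `L ⊗ kG → Λ`, `x ⊗ a ↦ x·ι(a)`. -/
noncomputable def prodLG (k G Λ : Type) [Field k] [CommGroup G] [Ring Λ] [Algebra k Λ]
    (ι : MonoidAlgebra k G →ₐ[k] Λ) (L : Subalgebra k Λ) :
    (L ⊗[k] MonoidAlgebra k G) →ₗ[k] Λ :=
  TensorProduct.lift
    (((LinearMap.mul k Λ).comp (Subalgebra.val L).toLinearMap).compl₂ ι.toLinearMap)

/-- The triple product map `L ⊗ kG ⊗ R → Λ`, `x ⊗ a ⊗ y ↦ x·ι(a)·y`. -/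
noncomputable def triProd (k G Λ : Type) [Field k] [CommGroup G] [Ring Λ] [Algebra k Λ]
    (ι : MonoidAlgebra k G →ₐ[k] Λ) (L R : Subalgebra k Λ) :
    ((L ⊗[k] MonoidAlgebra k G) ⊗[k] R) →ₗ[k] Λ :=
  TensorProduct.lift
    (((LinearMap.mul k Λ).comp (prodLG k G Λ ι L)).compl₂ (Subalgebra.val R).toLinearMap)


/-!
Write `J = (ker χ_A)Λ + Λ(ker χ_B)`. Through the triangular decomposition,
`x·ι(a)·y ↦ ε_L(x) λ(a) ε_R(y)` defines a functional `φ` on `Λ` with `z - φ(z)·1 ∈ J` for all `z`,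
so `Λ/J` is spanned by the class of `1`. If `λ(g) ≠ μ(g)`, then `ι(g) - λ(g)` and `ι(g) - μ(g)`
both lie in `J`, so `1 ∈ J` and the quotient vanishes. If `λ = μ`, the permutability conditions
let `ι(kG)` pass across `ker ε_L` and `ker ε_R`, which gives `φ(uw) = χ_A(u) φ(w)` for `u ∈ A` and
`φ(wu) = φ(w) χ_B(u)` for `u ∈ B`; hence `J ⊆ ker φ`, and `φ` identifies `Λ/J` with `k`.
-/

section CharKer

variable {k Λ : Type} [Field k] [Ring Λ] [Algebra k Λ] {S : Subalgebra k Λ}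

noncomputable def charKer (χ : S →ₐ[k] k) : Submodule k Λ :=
  Submodule.map S.val.toLinearMap ((RingHom.ker χ.toRingHom).restrictScalars k)

theorem coe_mem_charKer {χ : S →ₐ[k] k} {u : S} : (u : Λ) ∈ charKer χ ↔ χ u = 0 := by
  simp [charKer, RingHom.mem_ker]

theorem sub_smul_one_mem_charKer (χ : S →ₐ[k] k) (u : S) : (u : Λ) - χ u • 1 ∈ charKer χ := by
  simpa using coe_mem_charKer.2 (show χ (u - χ u • 1) = 0 by simp)

theorem mul_sub_smul_mem_charKer_mul_top (χ : S →ₐ[k] k) (u : S) (w : Λ) :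
    u * w - χ u • w ∈ charKer χ * ⊤ := by
  simpa [sub_mul] using
    Submodule.mul_mem_mul (sub_smul_one_mem_charKer χ u) (Submodule.mem_top (x := w))

theorem mul_sub_smul_mem_top_mul_charKer (χ : S →ₐ[k] k) (u : S) (w : Λ) :
    w * u - χ u • w ∈ ⊤ * charKer χ := by
  simpa [mul_sub] using
    Submodule.mul_mem_mul (Submodule.mem_top (x := w)) (sub_smul_one_mem_charKer χ u)

theorem charKer_mul_top_le_ker {χ : S →ₐ[k] k} {φ : Λ →ₗ[k] k}
    (h : ∀ (u : S) (w : Λ), φ (u * w) = χ u * φ w) : charKer χ * ⊤ ≤ LinearMap.ker φ := by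
  rw [Submodule.mul_le]
  rintro _ ⟨u, hu, rfl⟩ w -
  simp_all [RingHom.mem_ker]

theorem top_mul_charKer_le_ker {χ : S →ₐ[k] k} {φ : Λ →ₗ[k] k}
    (h : ∀ (w : Λ) (u : S), φ (w * u) = φ w * χ u) : ⊤ * charKer χ ≤ LinearMap.ker φ := by
  rw [Submodule.mul_le]
  rintro w - _ ⟨u, hu, rfl⟩
  simp_all [RingHom.mem_ker]

theorem mem_of_toSubmodule_eq_mul_left {A P Q : Subalgebra k Λ}
    (h : Subalgebra.toSubmodule A = Subalgebra.toSubmodule P * Subalgebra.toSubmodule Q)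
    {x : Λ} (hx : x ∈ P) : x ∈ A := by
  rw [← Subalgebra.mem_toSubmodule, h]
  simpa using Submodule.mul_mem_mul hx ((Subalgebra.mem_toSubmodule Q).2 Q.one_mem)

theorem mem_of_toSubmodule_eq_mul_right {A P Q : Subalgebra k Λ}
    (h : Subalgebra.toSubmodule A = Subalgebra.toSubmodule P * Subalgebra.toSubmodule Q)
    {x : Λ} (hx : x ∈ Q) : x ∈ A := by
  rw [← Subalgebra.mem_toSubmodule, h]
  simpa using Submodule.mul_mem_mul ((Subalgebra.mem_toSubmodule P).2 P.one_mem) hx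

theorem one_mem_charKer_mul_top_sup_of_ne {A B : Subalgebra k Λ} (χA : A →ₐ[k] k)
    (χB : B →ₐ[k] k) {u : Λ} (huA : u ∈ A) (huB : u ∈ B)
    (hne : χA ⟨u, huA⟩ ≠ χB ⟨u, huB⟩) : (1 : Λ) ∈ charKer χA * ⊤ ⊔ ⊤ * charKer χB := by
  set J := charKer χA * ⊤ ⊔ ⊤ * charKer χB
  have hA : u - χA ⟨u, huA⟩ • 1 ∈ J :=
    Submodule.mem_sup_left (by simpa using mul_sub_smul_mem_charKer_mul_top χA ⟨u, huA⟩ 1)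
  have hB : u - χB ⟨u, huB⟩ • 1 ∈ J :=
    Submodule.mem_sup_right (by simpa using mul_sub_smul_mem_top_mul_charKer χB ⟨u, huB⟩ 1)
  have hsub := J.smul_mem (χB ⟨u, huB⟩ - χA ⟨u, huA⟩)⁻¹ (J.sub_mem hA hB)
  rwa [sub_sub_sub_cancel_left, ← sub_smul, smul_smul, inv_mul_cancel₀ (sub_ne_zero.2 hne.symm),
    one_smul] at hsub

end CharKer

theorem apply_iota_eq_lift {k G Λ : Type} [Field k] [Monoid G] [Ring Λ] [Algebra k Λ]
    {ι : MonoidAlgebra k G →ₐ[k] Λ} {S : Subalgebra k Λ} (hS : ∀ a, ι a ∈ S)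
    (χ : S →ₐ[k] k) (ν : G →* kˣ)
    (h : ∀ (g : G) (hg : ι (MonoidAlgebra.of k G g) ∈ S), χ ⟨_, hg⟩ = ν g)
    (a : MonoidAlgebra k G) (ha : ι a ∈ S) :
    χ ⟨ι a, ha⟩ = MonoidAlgebra.lift k k G ((Units.coeHom k).comp ν) a := by
  have : χ.comp (ι.codRestrict S hS) = MonoidAlgebra.lift k k G ((Units.coeHom k).comp ν) :=
    MonoidAlgebra.algHom_ext (fun g => (h g (hS _)).trans (by simp)) (Subsingleton.elim _ _)
  exact DFunLike.congr_fun this a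

theorem finrank_quotient_eq_one_of_sub_smul_mem {k V : Type} [Field k] [AddCommGroup V]
    [Module k V] {J : Submodule k V} {φ : V →ₗ[k] k} {v : V} (hv : φ v = 1)
    (hJ : J ≤ LinearMap.ker φ) (h : ∀ z, z - φ z • v ∈ J) : Module.finrank k (V ⧸ J) = 1 := by
  obtain rfl : J = LinearMap.ker φ :=
    le_antisymm hJ fun z hz => by simpa [LinearMap.mem_ker.1 hz] using h z
  have hsurj : Function.Surjective φ := fun c => ⟨c • v, by simp [hv]⟩
  exact (φ.quotKerEquivOfSurjective hsurj).finrank_eq.trans (Module.finrank_self k)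

section Triangular

variable {k G Λ : Type} [Field k] [CommGroup G] [Ring Λ] [Algebra k Λ]
  {ι : MonoidAlgebra k G →ₐ[k] Λ} {L R : Subalgebra k Λ}

theorem triProd_tmul (x : L) (a : MonoidAlgebra k G) (y : R) :
    triProd k G Λ ι L R ((x ⊗ₜ a) ⊗ₜ y) = x * ι a * y := by
  simp [triProd, prodLG]

theorem triProd_induction (hsurj : Function.Surjective (triProd k G Λ ι L R)) {P : Λ → Prop}
    (zero : P 0) (add : ∀ u v, P u → P v → P (u + v))
    (mul : ∀ (x : L) (a : MonoidAlgebra k G) (y : R), P (x * ι a * y)) (z : Λ) : P z := by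
  obtain ⟨t, rfl⟩ := hsurj z
  induction t using TensorProduct.induction_on with
  | zero => rwa [map_zero]
  | add t₁ t₂ h₁ h₂ => rw [map_add]; exact add _ _ h₁ h₂
  | tmul u y =>
    induction u using TensorProduct.induction_on with
    | zero => rwa [TensorProduct.zero_tmul, map_zero]
    | add u₁ u₂ h₁ h₂ => rw [TensorProduct.add_tmul, map_add]; exact add _ _ h₁ h₂
    | tmul x a => rw [triProd_tmul]; exact mul x a y

variable (hTri : Function.Bijective (triProd k G Λ ι L R)) (εL : L →ₐ[k] k)
  (θ : MonoidAlgebra k G →ₐ[k] k) (εR : R →ₐ[k] k)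

noncomputable def triFunctional : Λ →ₗ[k] k :=
  TensorProduct.lift (((LinearMap.mul k k).comp (TensorProduct.lift
      (((LinearMap.mul k k).comp εL.toLinearMap).compl₂ θ.toLinearMap))).compl₂
        εR.toLinearMap) ∘ₗ
    (LinearEquiv.ofBijective _ hTri).symm.toLinearMap

theorem triFunctional_mul_mul (x : L) (a : MonoidAlgebra k G) (y : R) :
    triFunctional hTri εL θ εR (x * ι a * y) = εL x * θ a * εR y := by
  rw [← triProd_tmul]
  simp [triFunctional, LinearEquiv.ofBijective_symm_apply_apply]

theorem triFunctional_iota (a : MonoidAlgebra k G) : triFunctional hTri εL θ εR (ι a) = θ a := by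
  simpa using triFunctional_mul_mul hTri εL θ εR 1 a 1

theorem triFunctional_one : triFunctional hTri εL θ εR 1 = 1 := by
  simpa using triFunctional_iota hTri εL θ εR 1

theorem triFunctional_mul_left (x : L) (w : Λ) :
    triFunctional hTri εL θ εR (x * w) = εL x * triFunctional hTri εL θ εR w := by
  induction w using triProd_induction hTri.2 with
  | zero => simp
  | add u v hu hv => rw [mul_add, map_add, map_add, hu, hv, mul_add]
  | mul x' a y =>
    rw [← mul_assoc, ← mul_assoc, ← Subalgebra.coe_mul, triFunctional_mul_mul,
      triFunctional_mul_mul, map_mul]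
    ring

theorem triFunctional_mul_right (w : Λ) (y : R) :
    triFunctional hTri εL θ εR (w * y) = triFunctional hTri εL θ εR w * εR y := by
  induction w using triProd_induction hTri.2 with
  | zero => simp
  | add u v hu hv => rw [add_mul, map_add, map_add, hu, hv, add_mul]
  | mul x a y' =>
    rw [mul_assoc, ← Subalgebra.coe_mul, triFunctional_mul_mul, triFunctional_mul_mul, map_mul]
    ring

theorem triFunctional_iota_mul
    (hII_L : Subalgebra.toSubmodule ι.range * charKer εL ≤
      charKer εL * Subalgebra.toSubmodule ι.range)
    (a : MonoidAlgebra k G) (w : Λ) :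
    triFunctional hTri εL θ εR (ι a * w) = θ a * triFunctional hTri εL θ εR w := by
  set φ := triFunctional hTri εL θ εR
  induction w using triProd_induction hTri.2 with
  | zero => simp
  | add u v hu hv => rw [mul_add, map_add, map_add, hu, hv, mul_add]
  | mul x b y =>
    have hsplit : ι a * (x * ι b * y) =
        ι a * ((x : Λ) - εL x • 1) * (ι b * y) + εL x • (ι (a * b) * y) := by
      simp only [map_mul, mul_sub, sub_mul, mul_smul_comm, smul_mul_assoc, mul_one, mul_assoc,
        sub_add_cancel]
    have hvanish : φ (ι a * ((x : Λ) - εL x • 1) * (ι b * y)) = 0 := by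
      have hmem : ι a * ((x : Λ) - εL x • 1) ∈ charKer εL * Subalgebra.toSubmodule ι.range :=
        hII_L (Submodule.mul_mem_mul ⟨a, rfl⟩ (sub_smul_one_mem_charKer εL x))
      have hle : charKer εL * Subalgebra.toSubmodule ι.range * ⊤ ≤ charKer εL * ⊤ := by
        rw [mul_assoc]; exact mul_le_mul' le_rfl le_top
      exact charKer_mul_top_le_ker (triFunctional_mul_left hTri εL θ εR)
        (hle (Submodule.mul_mem_mul hmem Submodule.mem_top))
    rw [hsplit, map_add, map_smul, hvanish, triFunctional_mul_right, triFunctional_iota,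
      triFunctional_mul_mul, map_mul, smul_eq_mul]
    ring

theorem triFunctional_mul_iota
    (hII_R : charKer εR * Subalgebra.toSubmodule ι.range ≤
      Subalgebra.toSubmodule ι.range * charKer εR)
    (w : Λ) (a : MonoidAlgebra k G) :
    triFunctional hTri εL θ εR (w * ι a) = triFunctional hTri εL θ εR w * θ a := by
  set φ := triFunctional hTri εL θ εR
  induction w using triProd_induction hTri.2 with
  | zero => simp
  | add u v hu hv => rw [add_mul, map_add, map_add, hu, hv, add_mul]
  | mul x b y =>
    have hsplit : x * ι b * y * ι a =
        x * ι b * (((y : Λ) - εR y • 1) * ι a) + εR y • (x * ι (b * a)) := by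
      simp only [map_mul, mul_sub, sub_mul, mul_smul_comm, smul_mul_assoc, one_mul, mul_assoc,
        sub_add_cancel]
    have hvanish : φ (x * ι b * (((y : Λ) - εR y • 1) * ι a)) = 0 := by
      have hmem : ((y : Λ) - εR y • 1) * ι a ∈ Subalgebra.toSubmodule ι.range * charKer εR :=
        hII_R (Submodule.mul_mem_mul (sub_smul_one_mem_charKer εR y) ⟨a, rfl⟩)
      have hle : ⊤ * (Subalgebra.toSubmodule ι.range * charKer εR) ≤ ⊤ * charKer εR := by
        rw [← mul_assoc]; exact mul_le_mul' le_top le_rfl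
      exact top_mul_charKer_le_ker (triFunctional_mul_right hTri εL θ εR)
        (hle (Submodule.mul_mem_mul Submodule.mem_top hmem))
    rw [hsplit, map_add, map_smul, hvanish, triFunctional_mul_left, triFunctional_iota,
      triFunctional_mul_mul, map_mul, smul_eq_mul]
    ring

theorem char_apply_mul_iota {A : Subalgebra k Λ}
    (hA : Subalgebra.toSubmodule A = Subalgebra.toSubmodule L * Subalgebra.toSubmodule ι.range)
    (χA : A →ₐ[k] k) (hχL : ∀ (x : L) (hx : (x : Λ) ∈ A), χA ⟨x, hx⟩ = εL x)
    (hχG : ∀ (a : MonoidAlgebra k G) (ha : ι a ∈ A), χA ⟨ι a, ha⟩ = θ a)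
    (x : L) (a : MonoidAlgebra k G) (h : x * ι a ∈ A) : χA ⟨x * ι a, h⟩ = εL x * θ a := by
  have hxA : (x : Λ) ∈ A := mem_of_toSubmodule_eq_mul_left hA x.2
  have haA : ι a ∈ A := mem_of_toSubmodule_eq_mul_right hA ⟨a, rfl⟩
  rw [show (⟨x * ι a, h⟩ : A) = ⟨x, hxA⟩ * ⟨ι a, haA⟩ from rfl, map_mul, hχL, hχG]

theorem char_apply_iota_mul {B : Subalgebra k Λ}
    (hB : Subalgebra.toSubmodule B = Subalgebra.toSubmodule ι.range * Subalgebra.toSubmodule R)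
    (χB : B →ₐ[k] k) (hχG : ∀ (a : MonoidAlgebra k G) (ha : ι a ∈ B), χB ⟨ι a, ha⟩ = θ a)
    (hχR : ∀ (y : R) (hy : (y : Λ) ∈ B), χB ⟨y, hy⟩ = εR y)
    (a : MonoidAlgebra k G) (y : R) (h : ι a * y ∈ B) : χB ⟨ι a * y, h⟩ = θ a * εR y := by
  have haB : ι a ∈ B := mem_of_toSubmodule_eq_mul_left hB ⟨a, rfl⟩
  have hyB : (y : Λ) ∈ B := mem_of_toSubmodule_eq_mul_right hB y.2
  rw [show (⟨ι a * y, h⟩ : B) = ⟨ι a, haB⟩ * ⟨y, hyB⟩ from rfl, map_mul, hχG, hχR]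

theorem triFunctional_mul_eq_char_mul {A : Subalgebra k Λ}
    (hA : Subalgebra.toSubmodule A = Subalgebra.toSubmodule L * Subalgebra.toSubmodule ι.range)
    (hII_L : Subalgebra.toSubmodule ι.range * charKer εL ≤
      charKer εL * Subalgebra.toSubmodule ι.range)
    (χA : A →ₐ[k] k) (hχL : ∀ (x : L) (hx : (x : Λ) ∈ A), χA ⟨x, hx⟩ = εL x)
    (hχG : ∀ (a : MonoidAlgebra k G) (ha : ι a ∈ A), χA ⟨ι a, ha⟩ = θ a) (u : A) (w : Λ) :
    triFunctional hTri εL θ εR (u * w) = χA u * triFunctional hTri εL θ εR w := by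
  obtain ⟨u, hu⟩ := u
  have hu' : u ∈ Subalgebra.toSubmodule L * Subalgebra.toSubmodule ι.range := hA ▸ hu
  induction hu' using Submodule.mul_induction_on' with
  | mem_mul_mem x hx _ ha =>
    obtain ⟨a, rfl⟩ := ha
    show triFunctional hTri εL θ εR (((⟨x, hx⟩ : L) : Λ) * ι a * w) =
      χA ⟨((⟨x, hx⟩ : L) : Λ) * ι a, hu⟩ * triFunctional hTri εL θ εR w
    rw [char_apply_mul_iota εL θ hA χA hχL hχG, mul_assoc, triFunctional_mul_left,
      triFunctional_iota_mul hTri εL θ εR hII_L]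
    ring
  | add u hu₁ v hv₁ ihu ihv =>
    have huA : u ∈ A := by rwa [← Subalgebra.mem_toSubmodule, hA]
    have hvA : v ∈ A := by rwa [← Subalgebra.mem_toSubmodule, hA]
    show triFunctional hTri εL θ εR ((u + v) * w) =
      χA (⟨u, huA⟩ + ⟨v, hvA⟩) * triFunctional hTri εL θ εR w
    rw [add_mul, map_add, map_add, add_mul, ihu, ihv]

theorem triFunctional_mul_eq_mul_char {B : Subalgebra k Λ}
    (hB : Subalgebra.toSubmodule B = Subalgebra.toSubmodule ι.range * Subalgebra.toSubmodule R)
    (hII_R : charKer εR * Subalgebra.toSubmodule ι.range ≤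
      Subalgebra.toSubmodule ι.range * charKer εR)
    (χB : B →ₐ[k] k) (hχG : ∀ (a : MonoidAlgebra k G) (ha : ι a ∈ B), χB ⟨ι a, ha⟩ = θ a)
    (hχR : ∀ (y : R) (hy : (y : Λ) ∈ B), χB ⟨y, hy⟩ = εR y) (w : Λ) (u : B) :
    triFunctional hTri εL θ εR (w * u) = triFunctional hTri εL θ εR w * χB u := by
  obtain ⟨u, hu⟩ := u
  have hu' : u ∈ Subalgebra.toSubmodule ι.range * Subalgebra.toSubmodule R := hB ▸ hu
  induction hu' using Submodule.mul_induction_on' with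
  | mem_mul_mem _ ha y hy =>
    obtain ⟨a, rfl⟩ := ha
    show triFunctional hTri εL θ εR (w * (ι a * ((⟨y, hy⟩ : R) : Λ))) =
      triFunctional hTri εL θ εR w * χB ⟨ι a * ((⟨y, hy⟩ : R) : Λ), hu⟩
    rw [char_apply_iota_mul θ εR hB χB hχG hχR, ← mul_assoc, triFunctional_mul_right,
      triFunctional_mul_iota hTri εL θ εR hII_R]
    ring
  | add u hu₁ v hv₁ ihu ihv =>
    have huB : u ∈ B := by rwa [← Subalgebra.mem_toSubmodule, hB]
    have hvB : v ∈ B := by rwa [← Subalgebra.mem_toSubmodule, hB]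
    show triFunctional hTri εL θ εR (w * (u + v)) =
      triFunctional hTri εL θ εR w * χB (⟨u, huB⟩ + ⟨v, hvB⟩)
    rw [mul_add, map_add, map_add, mul_add, ihu, ihv]

theorem sub_triFunctional_smul_one_mem {A B : Subalgebra k Λ}
    (hA : Subalgebra.toSubmodule A = Subalgebra.toSubmodule L * Subalgebra.toSubmodule ι.range)
    (hB : Subalgebra.toSubmodule B = Subalgebra.toSubmodule ι.range * Subalgebra.toSubmodule R)
    (χA : A →ₐ[k] k) (χB : B →ₐ[k] k) (hχL : ∀ (x : L) (hx : (x : Λ) ∈ A), χA ⟨x, hx⟩ = εL x)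
    (hχG : ∀ (a : MonoidAlgebra k G) (ha : ι a ∈ A), χA ⟨ι a, ha⟩ = θ a)
    (hχR : ∀ (y : R) (hy : (y : Λ) ∈ B), χB ⟨y, hy⟩ = εR y) (z : Λ) :
    z - triFunctional hTri εL θ εR z • 1 ∈ charKer χA * ⊤ ⊔ ⊤ * charKer χB := by
  induction z using triProd_induction hTri.2 with
  | zero => simp
  | add u v hu hv =>
    convert add_mem hu hv using 1
    rw [map_add, add_smul]
    abel
  | mul x a y =>
    have hxaA : x * ι a ∈ A := by
      rw [← Subalgebra.mem_toSubmodule, hA]; exact Submodule.mul_mem_mul x.2 ⟨a, rfl⟩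
    set xa : A := ⟨x * ι a, hxaA⟩
    set yB : B := ⟨y, mem_of_toSubmodule_eq_mul_right hB y.2⟩
    have hxa := mul_sub_smul_mem_charKer_mul_top χA xa y
    have hyB := mul_sub_smul_mem_top_mul_charKer χB yB 1
    convert add_mem (Submodule.mem_sup_left hxa) (Submodule.smul_mem _ (χA xa)
      (Submodule.mem_sup_right hyB)) using 1
    rw [triFunctional_mul_mul, char_apply_mul_iota εL θ hA χA hχL hχG, hχR]
    simp only [xa, yB, smul_sub, smul_smul, one_mul]
    abel

end Triangular

theorem stmt4_general (k G Λ : Type) [Field k] [CommGroup G] [Fintype G]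
    [Ring Λ] [Algebra k Λ]
    (ι : MonoidAlgebra k G →ₐ[k] Λ)
    (L R : Subalgebra k Λ)
    (hTri : Function.Bijective (triProd k G Λ ι L R))
    (A B : Subalgebra k Λ)
    (hA : Subalgebra.toSubmodule A =
      Subalgebra.toSubmodule L * Subalgebra.toSubmodule ι.range)
    (hB : Subalgebra.toSubmodule B =
      Subalgebra.toSubmodule ι.range * Subalgebra.toSubmodule R)
    (εL : L →ₐ[k] k) (εR : R →ₐ[k] k)
    (hII_L : Subalgebra.toSubmodule ι.range *
        Submodule.map (Subalgebra.val L).toLinearMap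
          ((RingHom.ker εL.toRingHom).restrictScalars k) =
      Submodule.map (Subalgebra.val L).toLinearMap
          ((RingHom.ker εL.toRingHom).restrictScalars k) *
        Subalgebra.toSubmodule ι.range)
    (hII_R : Submodule.map (Subalgebra.val R).toLinearMap
          ((RingHom.ker εR.toRingHom).restrictScalars k) *
        Subalgebra.toSubmodule ι.range =
      Subalgebra.toSubmodule ι.range *
        Submodule.map (Subalgebra.val R).toLinearMap
          ((RingHom.ker εR.toRingHom).restrictScalars k))
    (lam mu : G →* kˣ)
    (χA : A →ₐ[k] k) (χB : B →ₐ[k] k)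
    (hχA_G : ∀ (g : G) (hg : ι (MonoidAlgebra.of k G g) ∈ A),
      χA ⟨ι (MonoidAlgebra.of k G g), hg⟩ = lam g)
    (hχA_L : ∀ (x : L) (hx : (x : Λ) ∈ A), χA ⟨(x : Λ), hx⟩ = εL x)
    (hχB_G : ∀ (g : G) (hg : ι (MonoidAlgebra.of k G g) ∈ B),
      χB ⟨ι (MonoidAlgebra.of k G g), hg⟩ = mu g)
    (hχB_R : ∀ (y : R) (hy : (y : Λ) ∈ B), χB ⟨(y : Λ), hy⟩ = εR y) :
    Module.finrank k
      (Λ ⧸ (Submodule.map (Subalgebra.val A).toLinearMap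
              ((RingHom.ker χA.toRingHom).restrictScalars k) * ⊤ ⊔
            ⊤ * Submodule.map (Subalgebra.val B).toLinearMap
              ((RingHom.ker χB.toRingHom).restrictScalars k))) =
      if lam = mu then 1 else 0 := by
  have hιA : ∀ a, ι a ∈ A := fun a => mem_of_toSubmodule_eq_mul_right hA ⟨a, rfl⟩
  have hιB : ∀ a, ι a ∈ B := fun a => mem_of_toSubmodule_eq_mul_left hB ⟨a, rfl⟩
  have hχA_ι := apply_iota_eq_lift hιA χA lam hχA_G
  have hχB_ι := apply_iota_eq_lift hιB χB mu hχB_G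
  set θ := MonoidAlgebra.lift k k G ((Units.coeHom k).comp lam)
  have hspan := sub_triFunctional_smul_one_mem hTri εL θ εR hA hB χA χB hχA_L hχA_ι hχB_R
  change Module.finrank k (Λ ⧸ (charKer χA * ⊤ ⊔ ⊤ * charKer χB)) = _
  split_ifs with hlm
  · subst hlm
    refine finrank_quotient_eq_one_of_sub_smul_mem (triFunctional_one hTri εL θ εR)
      (sup_le ?_ ?_) hspan
    · exact charKer_mul_top_le_ker
        (triFunctional_mul_eq_char_mul hTri εL θ εR hA hII_L.le χA hχA_L hχA_ι)
    · exact top_mul_charKer_le_ker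
        (triFunctional_mul_eq_mul_char hTri εL θ εR hB hII_R.le χB hχB_ι hχB_R)
  · obtain ⟨g, hg⟩ : ∃ g, lam g ≠ mu g := by contrapose! hlm; exact MonoidHom.ext hlm
    have hone := one_mem_charKer_mul_top_sup_of_ne χA χB (hιA _) (hιB _)
      (by rwa [hχA_G, hχB_G, Ne, Units.val_inj])
    have htop : charKer χA * ⊤ ⊔ ⊤ * charKer χB = ⊤ :=
      Submodule.eq_top_iff'.2 fun z => by
        simpa using add_mem (hspan z) (Submodule.smul_mem _ (triFunctional hTri εL θ εR z) hone)
    rw [htop]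
    exact Module.finrank_zero_of_subsingleton

/-- Lemma 2.1: in a triangular decomposition `Λ = L ⊗ kG ⊗ R` with subalgebras
`A = L·kG`, `B = kG·R`, nilpotent augmentation ideals and permutability conditions, for
characters `λ, μ ∈ Ĝ` the space `k_A(λ) ⊗_A Λ ⊗_B k_B(μ)` — realized as the quotient of
`Λ` by `(ker χ_A^λ)Λ + Λ(ker χ_B^μ)` — is one-dimensional if `λ = μ` and zero otherwise. -/
theorem stmt4 (k G Λ : Type) [Field k] [CommGroup G] [Fintype G]
    (hchar : (Fintype.card G : k) ≠ 0)
    (hroot : ∃ ζ : k, IsPrimitiveRoot ζ (Monoid.exponent G))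
    [Ring Λ] [Algebra k Λ] [FiniteDimensional k Λ]
    (ι : MonoidAlgebra k G →ₐ[k] Λ) (hι : Function.Injective ι)
    (L R : Subalgebra k Λ)
    (hTri : Function.Bijective (triProd k G Λ ι L R))
    (A B : Subalgebra k Λ)
    (hA : Subalgebra.toSubmodule A =
      Subalgebra.toSubmodule L * Subalgebra.toSubmodule ι.range)
    (hB : Subalgebra.toSubmodule B =
      Subalgebra.toSubmodule ι.range * Subalgebra.toSubmodule R)
    (εL : L →ₐ[k] k) (εR : R →ₐ[k] k)
    (hLnil : ∃ n : ℕ, (RingHom.ker εL.toRingHom) ^ n = ⊥)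
    (hRnil : ∃ n : ℕ, (RingHom.ker εR.toRingHom) ^ n = ⊥)
    (hII_L : Subalgebra.toSubmodule ι.range *
        Submodule.map (Subalgebra.val L).toLinearMap
          ((RingHom.ker εL.toRingHom).restrictScalars k) =
      Submodule.map (Subalgebra.val L).toLinearMap
          ((RingHom.ker εL.toRingHom).restrictScalars k) *
        Subalgebra.toSubmodule ι.range)
    (hII_R : Submodule.map (Subalgebra.val R).toLinearMap
          ((RingHom.ker εR.toRingHom).restrictScalars k) *
        Subalgebra.toSubmodule ι.range =
      Subalgebra.toSubmodule ι.range *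
        Submodule.map (Subalgebra.val R).toLinearMap
          ((RingHom.ker εR.toRingHom).restrictScalars k))
    (lam mu : G →* kˣ)
    (χA : A →ₐ[k] k) (χB : B →ₐ[k] k)
    (hχA_G : ∀ (g : G) (hg : ι (MonoidAlgebra.of k G g) ∈ A),
      χA ⟨ι (MonoidAlgebra.of k G g), hg⟩ = lam g)
    (hχA_L : ∀ (x : L) (hx : (x : Λ) ∈ A), χA ⟨(x : Λ), hx⟩ = εL x)
    (hχB_G : ∀ (g : G) (hg : ι (MonoidAlgebra.of k G g) ∈ B),
      χB ⟨ι (MonoidAlgebra.of k G g), hg⟩ = mu g)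
    (hχB_R : ∀ (y : R) (hy : (y : Λ) ∈ B), χB ⟨(y : Λ), hy⟩ = εR y) :
    Module.finrank k
      (Λ ⧸ (Submodule.map (Subalgebra.val A).toLinearMap
              ((RingHom.ker χA.toRingHom).restrictScalars k) * ⊤ ⊔
            ⊤ * Submodule.map (Subalgebra.val B).toLinearMap
              ((RingHom.ker χB.toRingHom).restrictScalars k))) =
      if lam = mu then 1 else 0 :=
  stmt4_general k G Λ ι L R hTri A B hA hB εL εR hII_L hII_R lam mu χA χB hχA_G hχA_L hχB_G hχB_R
end

section
/- In the triangular decomposition setting, the assignment λ ↦ L(λ) (the unique simple quotient of M(λ) = Λ ⊗_B k_B(λ)) gives a bijection from the dual group Ĝ onto the set of isomorphism classes of simple left Λ-modules. -/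
open TensorProduct

/-!
Call `v ∈ S` a highest weight vector of weight `λ` if `R⁺ v = 0` and `g v = λ(g) v` for `g ∈ G`.
These are exactly the vectors killed by `ker χ_B(λ)`, so `S` is a quotient of `M(λ)` iff it
contains a nonzero highest weight vector of weight `λ`.

Existence: as `R⁺` is nilpotent, its invariants in `S` are nonzero; they are `G`-stable because
`R⁺ kG = kG R⁺`, and there the commuting operators `g`, killed by `X ^ exp(G) - 1` which splits
over `k`, have a common eigenvector.

Uniqueness: for a highest weight vector `v`, `S = Λ v = L kG R v = k v + L⁺ S`, while `L⁺ S ≠ S`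
as `L⁺` is nilpotent. So `S / L⁺ S` is a line, `G`-stable since `kG L⁺ = L⁺ kG`, on which `G`
acts through the weight of any highest weight vector.
-/

open Polynomial in
theorem Module.End.exists_apply_eq_smul_of_aeval_prod_eq_zero {k V : Type*} [Field k]
    [AddCommGroup V] [Module k V] (T : Module.End k V) (m : Multiset k) {w : V} (hw : w ≠ 0)
    (h : aeval T (m.map fun z => X - C z).prod w = 0) : ∃ c : k, ∃ v ≠ 0, T v = c • v := by
  induction m using Multiset.induction_on generalizing w with
  | empty => exact absurd (by simpa using h) hw
  | cons z m ih =>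
    by_cases hu : aeval T (m.map fun z => X - C z).prod w = 0
    · exact ih hw hu
    · refine ⟨z, _, hu, ?_⟩
      simpa [Module.End.mul_apply, sub_eq_zero] using h

theorem Module.End.exists_apply_eq_smul_of_pow_eq_one {k V : Type*} [Field k]
    [AddCommGroup V] [Module k V] [Nontrivial V] {e : ℕ} {ζ : k} (hζ : IsPrimitiveRoot ζ e)
    (he : 0 < e) (T : Module.End k V) (hT : T ^ e = 1) : ∃ c : k, ∃ v ≠ 0, T v = c • v := by
  obtain ⟨w, hw⟩ := exists_ne (0 : V)
  refine T.exists_apply_eq_smul_of_aeval_prod_eq_zero (Polynomial.nthRootsFinset e (1 : k)).val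
    hw ?_
  rw [← Finset.prod_eq_multiset_prod, ← Polynomial.X_pow_sub_one_eq_prod he hζ]
  simp [hT]

theorem Module.End.exists_mem_apply_eq_smul_of_pow_eq_one {k V : Type*} [Field k]
    [AddCommGroup V] [Module k V] {e : ℕ} {ζ : k} (hζ : IsPrimitiveRoot ζ e)
    (he : 0 < e) (T : Module.End k V) (hT : T ^ e = 1) {W : Submodule k V} (hW : W ≠ ⊥)
    (hTW : ∀ x ∈ W, T x ∈ W) : ∃ c : k, ∃ v ∈ W, v ≠ 0 ∧ T v = c • v := by
  have : Nontrivial W := Submodule.nontrivial_iff_ne_bot.mpr hW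
  obtain ⟨c, v, hv, hTv⟩ := Module.End.exists_apply_eq_smul_of_pow_eq_one hζ he (T.restrict hTW)
    (by rw [Module.End.pow_restrict]; ext x; simp [hT])
  exact ⟨c, v, v.2, by simpa using hv, congrArg Subtype.val hTv⟩

namespace Representation

variable {k G V : Type*} [Field k] [AddCommGroup V] [Module k V]

theorem exists_monoidHom_apply_eq_smul [Group G] (ρ : Representation k G V) {v : V} (hv : v ≠ 0)
    (h : ∀ g, ∃ c : k, ρ g v = c • v) : ∃ χ : G →* kˣ, ∀ g, ρ g v = (χ g : k) • v := by
  choose c hc using h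
  have hinj := smul_left_injective k hv
  let χ : G →* k :=
    { toFun := c
      map_one' := hinj <| show c 1 • v = (1 : k) • v by
        rw [← hc, map_one, Module.End.one_apply, one_smul]
      map_mul' := fun g h => hinj <| show c (g * h) • v = (c g * c h) • v by
        rw [← hc, map_mul, Module.End.mul_apply, hc h, map_smul, hc g, smul_smul, mul_comm] }
  exact ⟨χ.toHomUnits, hc⟩

variable [CommGroup G] [Finite G]

theorem exists_mem_forall_mem_apply_eq_smul (ρ : Representation k G V) {ζ : k}
    (hζ : IsPrimitiveRoot ζ (Monoid.exponent G)) (s : Finset G) {W : Submodule k V} (hW : W ≠ ⊥)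
    (hWρ : ∀ g, ∀ x ∈ W, ρ g x ∈ W) : ∃ v ∈ W, v ≠ 0 ∧ ∀ g ∈ s, ∃ c : k, ρ g v = c • v := by
  classical
  induction s using Finset.induction_on generalizing W with
  | empty =>
    obtain ⟨v, hvW, hv⟩ := Submodule.exists_mem_ne_zero_of_ne_bot hW
    exact ⟨v, hvW, hv, by simp⟩
  | insert a s _ ih =>
    have he : 0 < Monoid.exponent G := Monoid.ExponentExists.of_finite.exponent_pos
    obtain ⟨c, u, huW, hu, hau⟩ := Module.End.exists_mem_apply_eq_smul_of_pow_eq_one hζ he (ρ a)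
      (by rw [← map_pow, Monoid.pow_exponent_eq_one, map_one]) hW (hWρ a)
    have hWa : W ⊓ Module.End.eigenspace (ρ a) c ≠ ⊥ :=
      fun h => hu <| (Submodule.mem_bot k).mp <| h ▸ ⟨huW, Module.End.mem_eigenspace_iff.mpr hau⟩
    have hWaρ : ∀ g, ∀ x ∈ W ⊓ Module.End.eigenspace (ρ a) c,
        ρ g x ∈ W ⊓ Module.End.eigenspace (ρ a) c := by
      rintro g x ⟨hxW, hx⟩
      refine ⟨hWρ g x hxW, Module.End.mem_eigenspace_iff.mpr ?_⟩
      rw [← Module.End.mul_apply, ← map_mul, mul_comm, map_mul, Module.End.mul_apply,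
        Module.End.mem_eigenspace_iff.mp hx, map_smul]
    obtain ⟨v, ⟨hvW, hva⟩, hv, hvs⟩ := ih hWa hWaρ
    refine ⟨v, hvW, hv, fun g hg => ?_⟩
    rcases Finset.mem_insert.mp hg with rfl | hg
    · exact ⟨c, Module.End.mem_eigenspace_iff.mp hva⟩
    · exact hvs g hg

theorem exists_mem_apply_eq_character_smul (ρ : Representation k G V) {ζ : k}
    (hζ : IsPrimitiveRoot ζ (Monoid.exponent G)) {W : Submodule k V} (hW : W ≠ ⊥)
    (hWρ : ∀ g, ∀ x ∈ W, ρ g x ∈ W) :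
    ∃ χ : G →* kˣ, ∃ v ∈ W, v ≠ 0 ∧ ∀ g, ρ g v = (χ g : k) • v := by
  have := Fintype.ofFinite G
  obtain ⟨v, hvW, hv, hc⟩ := ρ.exists_mem_forall_mem_apply_eq_smul hζ Finset.univ hW hWρ
  obtain ⟨χ, hχ⟩ := ρ.exists_monoidHom_apply_eq_smul hv fun g => hc g (Finset.mem_univ g)
  exact ⟨χ, v, hvW, hv, hχ⟩

end Representation

section NilpotentIdeal

variable {A M : Type*} [Ring A] [AddCommGroup M] [Module A M] {I : Ideal A}

theorem Submodule.exists_mem_ne_zero_forall_smul_eq_zero_of_pow_smul_eq_bot {n : ℕ}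
    {N : Submodule A M} (hN : N ≠ ⊥) (h : I ^ n • N = ⊥) :
    ∃ m ∈ N, m ≠ 0 ∧ ∀ a ∈ I, a • m = 0 := by
  induction n generalizing N with
  | zero => rw [Submodule.pow_zero, Ideal.one_eq_top, Submodule.top_smul] at h; exact absurd h hN
  | succ n ih =>
    by_cases hIN : I • N = ⊥
    · obtain ⟨m, hmN, hm⟩ := Submodule.exists_mem_ne_zero_of_ne_bot hN
      exact ⟨m, hmN, hm, fun a ha =>
        (Submodule.mem_bot A).mp (hIN ▸ Submodule.smul_mem_smul ha hmN)⟩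
    · obtain ⟨m, hm, hm0, hIm⟩ := ih hIN (by rwa [← Submodule.mul_smul, ← Submodule.pow_succ])
      exact ⟨m, Submodule.smul_le_right hm, hm0, hIm⟩

theorem Ideal.smul_top_ne_top_of_pow_eq_bot [Nontrivial M] {n : ℕ} (hI : I ^ n = ⊥) :
    I • (⊤ : Submodule A M) ≠ ⊤ := by
  intro h
  have hpow : ∀ m : ℕ, I ^ m • (⊤ : Submodule A M) = ⊤ := fun m => by
    induction m with
    | zero => rw [Submodule.pow_zero, Ideal.one_eq_top, Submodule.top_smul]
    | succ m ih => rw [Submodule.pow_succ, Submodule.mul_smul, h, ih]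
  exact top_ne_bot ((hpow n).symm.trans (by rw [hI, Submodule.bot_smul]))

end NilpotentIdeal

theorem AlgHom.sub_algebraMap_mem_ker {k A : Type*} [CommRing k] [Ring A] [Algebra k A]
    (χ : A →ₐ[k] k) (a : A) : a - algebraMap k A (χ a) ∈ RingHom.ker χ.toRingHom := by
  simp [RingHom.mem_ker, AlgHom.commutes]

section Character

variable {k A M : Type*} [CommRing k] [Ring A] [Algebra k A] [AddCommGroup M] [Module A M]
  [Module k M] [IsScalarTower k A M] (χ : A →ₐ[k] k)

theorem AlgHom.smul_eq_of_forall_mem_ker {v : M}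
    (hv : ∀ a ∈ RingHom.ker χ.toRingHom, a • v = 0) (a : A) : a • v = χ a • v := by
  rw [← sub_eq_zero, ← algebraMap_smul A, ← sub_smul, hv _ (χ.sub_algebraMap_mem_ker a)]

def AlgHom.eigenSubalgebra (v : M) : Subalgebra k A where
  carrier := {a | a • v = χ a • v}
  mul_mem' {a b} (ha : a • v = χ a • v) (hb : b • v = χ b • v) :=
    show (a * b) • v = χ (a * b) • v by
      rw [mul_smul, hb, smul_comm, ha, smul_smul, map_mul, mul_comm]
  add_mem' {a b} (ha : a • v = χ a • v) (hb : b • v = χ b • v) :=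
    show (a + b) • v = χ (a + b) • v by rw [add_smul, ha, hb, map_add, add_smul]
  algebraMap_mem' c := by simp [AlgHom.commutes]

theorem AlgHom.mem_eigenSubalgebra {v : M} {a : A} :
    a ∈ χ.eigenSubalgebra v ↔ a • v = χ a • v :=
  Iff.rfl

theorem AlgHom.eigenSubalgebra_eq_top_iff {v : M} :
    χ.eigenSubalgebra v = ⊤ ↔ ∀ a ∈ RingHom.ker χ.toRingHom, a • v = 0 := by
  rw [eq_top_iff]
  refine ⟨fun h a ha => ?_, fun h a _ => χ.smul_eq_of_forall_mem_ker h a⟩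
  rw [χ.mem_eigenSubalgebra.mp (h trivial), show χ a = 0 from ha, zero_smul]

end Character

theorem Module.End.eq_of_apply_eq_smul_of_mem_span_sup {k V : Type*} [Field k] [AddCommGroup V]
    [Module k V] (T : Module.End k V) {W : Submodule k V} (hTW : ∀ x ∈ W, T x ∈ W) {v₁ v₂ : V}
    (hv₂ : v₂ ∈ Submodule.span k {v₁} ⊔ W) (hv₂W : v₂ ∉ W) {a b : k} (h₁ : T v₁ = a • v₁)
    (h₂ : T v₂ = b • v₂) : a = b := by
  obtain ⟨_, hd, w, hw, rfl⟩ := Submodule.mem_sup.mp hv₂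
  obtain ⟨d, rfl⟩ := Submodule.mem_span_singleton.mp hd
  have hdv₁ : d • v₁ ∉ W := fun h => hv₂W (W.add_mem h hw)
  have hdiff : (a - b) • d • v₁ = b • w - T w := by
    rw [map_add, map_smul, h₁, smul_comm, smul_add] at h₂
    rw [sub_smul, eq_sub_of_add_eq h₂]
    abel
  by_contra hab
  refine hdv₁ ((W.smul_mem_iff (sub_ne_zero.mpr hab)).mp ?_)
  rw [hdiff]
  exact W.sub_mem (W.smul_mem b hw) (hTW w hw)

theorem IsSimpleModule.exists_surjective_quotient_span_iff {Λ S : Type*} [Ring Λ]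
    [AddCommGroup S] [Module Λ S] [IsSimpleModule Λ S] (X : Set Λ) :
    (∃ f : (Λ ⧸ Ideal.span X) →ₗ[Λ] S, Function.Surjective f) ↔
      ∃ v : S, v ≠ 0 ∧ ∀ x ∈ X, x • v = 0 := by
  constructor
  · rintro ⟨f, hf⟩
    have hf_mk (x : Λ) : f (Submodule.Quotient.mk x) = x • f (Submodule.Quotient.mk 1) := by
      rw [← map_smul, ← Submodule.Quotient.mk_smul, smul_eq_mul, mul_one]
    refine ⟨f (Submodule.Quotient.mk 1), fun h0 => ?_, fun x hx => ?_⟩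
    · have := IsSimpleModule.nontrivial Λ S
      obtain ⟨s, hs⟩ := exists_ne (0 : S)
      obtain ⟨q, rfl⟩ := hf s
      obtain ⟨x, rfl⟩ := Submodule.Quotient.mk_surjective _ q
      exact hs (by rw [hf_mk, h0, smul_zero])
    · rw [← hf_mk, (Submodule.Quotient.mk_eq_zero _).mpr (Ideal.subset_span hx), map_zero]
  · rintro ⟨v, hv, hX⟩
    have hle : Ideal.span X ≤ LinearMap.ker (LinearMap.toSpanSingleton Λ S v) :=
      Ideal.span_le.mpr hX
    refine ⟨(Ideal.span X).liftQ _ hle, Function.Surjective.of_comp (g := (Ideal.span X).mkQ) ?_⟩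
    rw [← LinearMap.coe_comp, Submodule.liftQ_mkQ]
    exact IsSimpleModule.toSpanSingleton_surjective Λ hv

section SubalgebraProduct

variable {k A : Type*} [CommSemiring k] [Semiring A] [Algebra k A] {B P Q : Subalgebra k A}

theorem Subalgebra.left_le_of_toSubmodule_eq_mul
    (h : Subalgebra.toSubmodule B = Subalgebra.toSubmodule P * Subalgebra.toSubmodule Q) :
    P ≤ B := fun x hx => by
  have := Submodule.mul_mem_mul (M := Subalgebra.toSubmodule P)
    (N := Subalgebra.toSubmodule Q) hx Q.one_mem
  rwa [mul_one, ← h] at this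

theorem Subalgebra.right_le_of_toSubmodule_eq_mul
    (h : Subalgebra.toSubmodule B = Subalgebra.toSubmodule P * Subalgebra.toSubmodule Q) :
    Q ≤ B := fun x hx => by
  have := Submodule.mul_mem_mul (M := Subalgebra.toSubmodule P)
    (N := Subalgebra.toSubmodule Q) P.one_mem hx
  rwa [one_mul, ← h] at this

end SubalgebraProduct

section TriangularDecomposition

open MonoidAlgebra

variable {k G Λ : Type} [Field k] [CommGroup G] [Ring Λ] [Algebra k Λ] {S : Type*}
  [AddCommGroup S] [Module Λ S]
  (ι : MonoidAlgebra k G →ₐ[k] Λ) {L R : Subalgebra k Λ} (εL : L →ₐ[k] k) (εR : R →ₐ[k] k)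

theorem ker_smul_of_smul_eq_zero
    (hII_R : Submodule.map (Subalgebra.val R).toLinearMap
          ((RingHom.ker εR.toRingHom).restrictScalars k) *
        Subalgebra.toSubmodule ι.range =
      Subalgebra.toSubmodule ι.range *
        Submodule.map (Subalgebra.val R).toLinearMap
          ((RingHom.ker εR.toRingHom).restrictScalars k))
    {x : S} (hx : ∀ y ∈ RingHom.ker εR.toRingHom, y • x = 0) (g : G) :
    ∀ y ∈ RingHom.ker εR.toRingHom, y • ι (of k G g) • x = 0 := by
  intro y hy
  have hmem : (y : Λ) * ι (of k G g) ∈ Subalgebra.toSubmodule ι.range *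
      Submodule.map (Subalgebra.val R).toLinearMap ((RingHom.ker εR.toRingHom).restrictScalars k) :=
    hII_R ▸ Submodule.mul_mem_mul ⟨y, hy, rfl⟩ ⟨_, rfl⟩
  refine (mul_smul (y : Λ) _ x).symm.trans (Submodule.mul_induction_on hmem ?_ ?_)
  · rintro a - _ ⟨z, hz, rfl⟩
    rw [mul_smul]
    exact (congrArg (a • ·) (hx z hz)).trans (smul_zero a)
  · intro a b ha hb
    rw [add_smul, ha, hb, add_zero]

theorem of_smul_mem_ker_smul_top
    (hII_L : Subalgebra.toSubmodule ι.range *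
        Submodule.map (Subalgebra.val L).toLinearMap
          ((RingHom.ker εL.toRingHom).restrictScalars k) =
      Submodule.map (Subalgebra.val L).toLinearMap
          ((RingHom.ker εL.toRingHom).restrictScalars k) *
        Subalgebra.toSubmodule ι.range)
    (g : G) {x : S} (hx : x ∈ RingHom.ker εL.toRingHom • (⊤ : Submodule L S)) :
    ι (of k G g) • x ∈ RingHom.ker εL.toRingHom • (⊤ : Submodule L S) := by
  refine Submodule.smul_induction_on hx (fun ℓ hℓ s _ => ?_) fun a b ha hb => ?_
  · have hmem : ι (of k G g) * (ℓ : Λ) ∈ Submodule.map (Subalgebra.val L).toLinearMap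
        ((RingHom.ker εL.toRingHom).restrictScalars k) * Subalgebra.toSubmodule ι.range :=
      hII_L ▸ Submodule.mul_mem_mul ⟨_, rfl⟩ ⟨ℓ, hℓ, rfl⟩
    change ι (of k G g) • (ℓ : Λ) • s ∈ _
    rw [← mul_smul]
    refine Submodule.mul_induction_on hmem ?_ ?_
    · rintro _ ⟨z, hz, rfl⟩ a -
      rw [mul_smul]
      exact Submodule.smul_mem_smul (r := z) hz Submodule.mem_top
    · intro a b ha hb
      rw [add_smul]
      exact add_mem ha hb
  · rw [smul_add]
    exact add_mem ha hb

variable [Module k S] [IsScalarTower k Λ S]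

def IsHighestWeightVector (lam : G →* kˣ) (v : S) : Prop :=
  (∀ y ∈ RingHom.ker εR.toRingHom, y • v = 0) ∧ ∀ g, ι (of k G g) • v = (lam g : k) • v

theorem exists_isHighestWeightVector [Finite G] [Nontrivial S]
    (hroot : ∃ ζ : k, IsPrimitiveRoot ζ (Monoid.exponent G))
    (hRnil : ∃ n : ℕ, (RingHom.ker εR.toRingHom) ^ n = ⊥)
    (hII_R : Submodule.map (Subalgebra.val R).toLinearMap
          ((RingHom.ker εR.toRingHom).restrictScalars k) *
        Subalgebra.toSubmodule ι.range =
      Subalgebra.toSubmodule ι.range *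
        Submodule.map (Subalgebra.val R).toLinearMap
          ((RingHom.ker εR.toRingHom).restrictScalars k)) :
    ∃ (lam : G →* kˣ) (v : S), v ≠ 0 ∧ IsHighestWeightVector ι εR lam v := by
  obtain ⟨ζ, hζ⟩ := hroot
  obtain ⟨n, hn⟩ := hRnil
  let N : Submodule k S :=
    ⨅ y ∈ RingHom.ker εR.toRingHom, LinearMap.ker (Algebra.lsmul k k S (y : Λ))
  have mem_N {x : S} : x ∈ N ↔ ∀ y ∈ RingHom.ker εR.toRingHom, y • x = 0 := by
    simp [N, Subalgebra.smul_def]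
  have hN : N ≠ ⊥ := by
    obtain ⟨x, -, hx, hRx⟩ := Submodule.exists_mem_ne_zero_forall_smul_eq_zero_of_pow_smul_eq_bot
      (N := (⊤ : Submodule R S)) top_ne_bot (by rw [hn, Submodule.bot_smul])
    exact fun h => hx ((Submodule.mem_bot k).mp (h ▸ mem_N.mpr hRx))
  let ρ : Representation k G S := ((Algebra.lsmul k k S).comp ι).toMonoidHom.comp (of k G)
  obtain ⟨lam, v, hvN, hv, hlam⟩ := ρ.exists_mem_apply_eq_character_smul hζ hN
    fun g x hx => mem_N.mpr (ker_smul_of_smul_eq_zero ι εR hII_R (mem_N.mp hx) g)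
  exact ⟨lam, v, hv, mem_N.mp hvN, hlam⟩

theorem forall_mem_ker_smul_eq_zero_iff {B : Subalgebra k Λ}
    (hB : Subalgebra.toSubmodule B =
      Subalgebra.toSubmodule ι.range * Subalgebra.toSubmodule R)
    (lam : G →* kˣ) (χ : B →ₐ[k] k)
    (hχG : ∀ (g : G) (hg : ι (of k G g) ∈ B), χ ⟨ι (of k G g), hg⟩ = lam g)
    (hχR : ∀ (y : R) (hy : (y : Λ) ∈ B), χ ⟨(y : Λ), hy⟩ = εR y) {v : S} :
    (∀ b ∈ RingHom.ker χ.toRingHom, b • v = 0) ↔ IsHighestWeightVector ι εR lam v := by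
  have hιB : ι.range ≤ B := Subalgebra.left_le_of_toSubmodule_eq_mul hB
  have hRB : R ≤ B := Subalgebra.right_le_of_toSubmodule_eq_mul hB
  have hofB (g : G) : ι (of k G g) ∈ B := hιB ⟨_, rfl⟩
  rw [← χ.eigenSubalgebra_eq_top_iff, eq_top_iff]
  constructor
  · intro h
    refine ⟨fun y hy => ?_, fun g => ?_⟩
    · have := χ.mem_eigenSubalgebra.mp (h (Algebra.mem_top (x := ⟨y, hRB y.2⟩)))
      rwa [hχR y, show εR y = 0 from hy, zero_smul] at this
    · have := χ.mem_eigenSubalgebra.mp (h (Algebra.mem_top (x := ⟨_, hofB g⟩)))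
      rwa [hχG] at this
  · rintro ⟨hR, hG⟩ b -
    set E := (χ.eigenSubalgebra v).map B.val
    have hιE : ι.range ≤ E := by
      rintro _ ⟨a, rfl⟩
      induction a using MonoidAlgebra.induction_on with
      | of g => exact ⟨⟨_, hofB g⟩, χ.mem_eigenSubalgebra.mpr ((hG g).trans (by rw [hχG])), rfl⟩
      | add a b ha hb => simpa using add_mem ha hb
      | smul c a ha => simpa using E.smul_mem ha c
    have hRE : R ≤ E := fun y hy => ⟨⟨y, hRB hy⟩, χ.mem_eigenSubalgebra.mpr
      ((εR.smul_eq_of_forall_mem_ker hR ⟨y, hy⟩).trans (by rw [hχR ⟨y, hy⟩])), rfl⟩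
    have hBE : Subalgebra.toSubmodule B ≤ Subalgebra.toSubmodule E := by
      rw [hB, Submodule.mul_le]
      exact fun x hx y hy => E.mul_mem (hιE hx) (hRE hy)
    obtain ⟨b', hb', hbb'⟩ := hBE b.2
    rwa [Subtype.ext hbb'] at hb'

theorem mem_span_singleton_sup_ker_smul_top [IsSimpleModule Λ S]
    (hTri : Function.Surjective (triProd k G Λ ι L R)) {lam : G →* kˣ} {v : S} (hv : v ≠ 0)
    (h : IsHighestWeightVector ι εR lam v) (s : S) :
    s ∈ Submodule.span k {v} ⊔
      (RingHom.ker εL.toRingHom • (⊤ : Submodule L S)).restrictScalars k := by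
  set K := Submodule.span k {v} ⊔
    (RingHom.ker εL.toRingHom • (⊤ : Submodule L S)).restrictScalars k
  have hιv (a : MonoidAlgebra k G) : ι a • v ∈ Submodule.span k {v} := by
    induction a using MonoidAlgebra.induction_on with
    | of g => rw [h.2 g]; exact Submodule.smul_mem _ _ (Submodule.mem_span_singleton_self v)
    | add a b ha hb => rw [map_add, add_smul]; exact add_mem ha hb
    | smul c a ha => rw [map_smul, smul_assoc]; exact Submodule.smul_mem _ c ha
  have hLv (ℓ : L) : ℓ • v ∈ K := by
    have hℓ : ℓ • v = (ℓ - algebraMap k L (εL ℓ)) • v + εL ℓ • v := by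
      rw [sub_smul, algebraMap_smul, sub_add_cancel]
    rw [hℓ]
    refine add_mem (Submodule.mem_sup_right ?_) (Submodule.mem_sup_left ?_)
    · exact (Submodule.restrictScalars_mem k _ _).mpr
        (Submodule.smul_mem_smul (εL.sub_algebraMap_mem_ker ℓ) Submodule.mem_top)
    · exact Submodule.smul_mem _ _ (Submodule.mem_span_singleton_self v)
  have hLιv (p : L ⊗[k] MonoidAlgebra k G) : prodLG k G Λ ι L p • v ∈ K := by
    induction p using TensorProduct.induction_on with
    | zero => simp
    | add p q hp hq => rw [map_add, add_smul]; exact add_mem hp hq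
    | tmul ℓ a =>
      obtain ⟨d, hd⟩ := Submodule.mem_span_singleton.mp (hιv a)
      have : prodLG k G Λ ι L (ℓ ⊗ₜ a) = ℓ * ι a := by simp [prodLG]
      rw [this, mul_smul, ← hd, smul_comm]
      exact K.smul_mem d (hLv ℓ)
  obtain ⟨x, rfl⟩ := IsSimpleModule.toSpanSingleton_surjective Λ hv s
  obtain ⟨t, rfl⟩ := hTri x
  rw [LinearMap.toSpanSingleton_apply]
  induction t using TensorProduct.induction_on with
  | zero => simp
  | add t u ht hu => rw [map_add, add_smul]; exact add_mem ht hu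
  | tmul p y =>
    have : triProd k G Λ ι L R (p ⊗ₜ y) = prodLG k G Λ ι L p * y := by simp [triProd]
    rw [this, mul_smul, show (y : Λ) • v = εR y • v from εR.smul_eq_of_forall_mem_ker h.1 y,
      smul_comm]
    exact K.smul_mem _ (hLιv p)

theorem eq_of_isHighestWeightVector [IsSimpleModule Λ S]
    (hTri : Function.Surjective (triProd k G Λ ι L R))
    (hLnil : ∃ n : ℕ, (RingHom.ker εL.toRingHom) ^ n = ⊥)
    (hII_L : Subalgebra.toSubmodule ι.range *
        Submodule.map (Subalgebra.val L).toLinearMap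
          ((RingHom.ker εL.toRingHom).restrictScalars k) =
      Submodule.map (Subalgebra.val L).toLinearMap
          ((RingHom.ker εL.toRingHom).restrictScalars k) *
        Subalgebra.toSubmodule ι.range)
    {lam₁ lam₂ : G →* kˣ} {v₁ v₂ : S} (hv₁ : v₁ ≠ 0) (hv₂ : v₂ ≠ 0)
    (h₁ : IsHighestWeightVector ι εR lam₁ v₁) (h₂ : IsHighestWeightVector ι εR lam₂ v₂) :
    lam₁ = lam₂ := by
  obtain ⟨n, hn⟩ := hLnil
  have := IsSimpleModule.nontrivial Λ S
  have hv₂W : v₂ ∉ (RingHom.ker εL.toRingHom • (⊤ : Submodule L S)).restrictScalars k := by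
    intro hv₂W
    refine Ideal.smul_top_ne_top_of_pow_eq_bot (M := S) hn ?_
    rw [← Submodule.restrictScalars_eq_top_iff k, eq_top_iff]
    intro s _
    have := mem_span_singleton_sup_ker_smul_top ι εL εR hTri hv₂ h₂ s
    rwa [sup_eq_right.mpr ((Submodule.span_singleton_le_iff_mem _ _).mpr hv₂W)] at this
  refine MonoidHom.ext fun g => Units.ext ?_
  exact (Algebra.lsmul k k S (ι (of k G g))).eq_of_apply_eq_smul_of_mem_span_sup
    (fun x hx => of_smul_mem_ker_smul_top ι εL hII_L g hx)
    (mem_span_singleton_sup_ker_smul_top ι εL εR hTri hv₁ h₁ v₂) hv₂W (h₁.2 g) (h₂.2 g)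

end TriangularDecomposition

theorem stmt7_general (k G Λ : Type) [Field k] [CommGroup G] [Fintype G]
    (hroot : ∃ ζ : k, IsPrimitiveRoot ζ (Monoid.exponent G))
    [Ring Λ] [Algebra k Λ]
    (ι : MonoidAlgebra k G →ₐ[k] Λ)
    (L R : Subalgebra k Λ)
    (hTri : Function.Bijective (triProd k G Λ ι L R))
    (B : Subalgebra k Λ)
    (hB : Subalgebra.toSubmodule B =
      Subalgebra.toSubmodule ι.range * Subalgebra.toSubmodule R)
    (εL : L →ₐ[k] k) (εR : R →ₐ[k] k)
    (hLnil : ∃ n : ℕ, (RingHom.ker εL.toRingHom) ^ n = ⊥)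
    (hRnil : ∃ n : ℕ, (RingHom.ker εR.toRingHom) ^ n = ⊥)
    (hII_L : Subalgebra.toSubmodule ι.range *
        Submodule.map (Subalgebra.val L).toLinearMap
          ((RingHom.ker εL.toRingHom).restrictScalars k) =
      Submodule.map (Subalgebra.val L).toLinearMap
          ((RingHom.ker εL.toRingHom).restrictScalars k) *
        Subalgebra.toSubmodule ι.range)
    (hII_R : Submodule.map (Subalgebra.val R).toLinearMap
          ((RingHom.ker εR.toRingHom).restrictScalars k) *
        Subalgebra.toSubmodule ι.range =
      Subalgebra.toSubmodule ι.range *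
        Submodule.map (Subalgebra.val R).toLinearMap
          ((RingHom.ker εR.toRingHom).restrictScalars k))
    (χB : (G →* kˣ) → (B →ₐ[k] k))
    (hχB_G : ∀ (lam : G →* kˣ) (g : G) (hg : ι (MonoidAlgebra.of k G g) ∈ B),
      χB lam ⟨ι (MonoidAlgebra.of k G g), hg⟩ = lam g)
    (hχB_R : ∀ (lam : G →* kˣ) (y : R) (hy : (y : Λ) ∈ B),
      χB lam ⟨(y : Λ), hy⟩ = εR y) :
    ∀ (S : Type) [AddCommGroup S] [Module Λ S], IsSimpleModule Λ S →
      ∃! lam : G →* kˣ,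
        ∃ f : (Λ ⧸ Ideal.span
            ((Subalgebra.val B) '' (RingHom.ker (χB lam).toRingHom : Set B))) →ₗ[Λ] S,
          Function.Surjective f := by
  intro S _ _ hS
  let _ : Module k S := Module.compHom S (algebraMap k Λ)
  have : IsScalarTower k Λ S := .of_algebraMap_smul fun _ _ => rfl
  have := IsSimpleModule.nontrivial Λ S
  have hquot (lam : G →* kˣ) :
      (∃ f : (Λ ⧸ Ideal.span
          ((Subalgebra.val B) '' (RingHom.ker (χB lam).toRingHom : Set B))) →ₗ[Λ] S,
        Function.Surjective f) ↔ ∃ v : S, v ≠ 0 ∧ IsHighestWeightVector ι εR lam v := by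
    rw [IsSimpleModule.exists_surjective_quotient_span_iff]
    simp only [Set.forall_mem_image, SetLike.mem_coe]
    exact exists_congr fun v => and_congr_right fun _ =>
      forall_mem_ker_smul_eq_zero_iff ι εR hB lam (χB lam) (hχB_G lam) (hχB_R lam)
  simp only [hquot]
  obtain ⟨lam, v, hv, hlam⟩ := exists_isHighestWeightVector (S := S) ι εR hroot hRnil hII_R
  exact ⟨lam, ⟨v, hv, hlam⟩, fun lam' ⟨v', hv', hlam'⟩ =>
    eq_of_isHighestWeightVector ι εL εR hTri.2 hLnil hII_L hv' hv hlam' hlam⟩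

/-- Theorem 2.4 / 3.10: in the triangular decomposition setting, the assignment
`λ ↦ L(λ)` (unique simple quotient of `M(λ) = Λ ⊗_B k_B(λ)`, realized as `Λ/Λ·ker χ_B^λ`)
gives a bijection from the dual group `Ĝ` onto the isomorphism classes of simple left
`Λ`-modules: every simple left `Λ`-module is a quotient of `M(λ)` for exactly one `λ`. -/
theorem stmt7 (k G Λ : Type) [Field k] [CommGroup G] [Fintype G]
    (hchar : (Fintype.card G : k) ≠ 0)
    (hroot : ∃ ζ : k, IsPrimitiveRoot ζ (Monoid.exponent G))
    [Ring Λ] [Algebra k Λ] [FiniteDimensional k Λ]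
    (ι : MonoidAlgebra k G →ₐ[k] Λ) (hι : Function.Injective ι)
    (L R : Subalgebra k Λ)
    (hTri : Function.Bijective (triProd k G Λ ι L R))
    (A B : Subalgebra k Λ)
    (hA : Subalgebra.toSubmodule A =
      Subalgebra.toSubmodule L * Subalgebra.toSubmodule ι.range)
    (hB : Subalgebra.toSubmodule B =
      Subalgebra.toSubmodule ι.range * Subalgebra.toSubmodule R)
    (εL : L →ₐ[k] k) (εR : R →ₐ[k] k)
    (hLnil : ∃ n : ℕ, (RingHom.ker εL.toRingHom) ^ n = ⊥)
    (hRnil : ∃ n : ℕ, (RingHom.ker εR.toRingHom) ^ n = ⊥)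
    (hII_L : Subalgebra.toSubmodule ι.range *
        Submodule.map (Subalgebra.val L).toLinearMap
          ((RingHom.ker εL.toRingHom).restrictScalars k) =
      Submodule.map (Subalgebra.val L).toLinearMap
          ((RingHom.ker εL.toRingHom).restrictScalars k) *
        Subalgebra.toSubmodule ι.range)
    (hII_R : Submodule.map (Subalgebra.val R).toLinearMap
          ((RingHom.ker εR.toRingHom).restrictScalars k) *
        Subalgebra.toSubmodule ι.range =
      Subalgebra.toSubmodule ι.range *
        Submodule.map (Subalgebra.val R).toLinearMap
          ((RingHom.ker εR.toRingHom).restrictScalars k))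
    (χB : (G →* kˣ) → (B →ₐ[k] k))
    (hχB_G : ∀ (lam : G →* kˣ) (g : G) (hg : ι (MonoidAlgebra.of k G g) ∈ B),
      χB lam ⟨ι (MonoidAlgebra.of k G g), hg⟩ = lam g)
    (hχB_R : ∀ (lam : G →* kˣ) (y : R) (hy : (y : Λ) ∈ B),
      χB lam ⟨(y : Λ), hy⟩ = εR y) :
    ∀ (S : Type) [AddCommGroup S] [Module Λ S], IsSimpleModule Λ S →
      ∃! lam : G →* kˣ,
        ∃ f : (Λ ⧸ Ideal.span
            ((Subalgebra.val B) '' (RingHom.ker (χB lam).toRingHom : Set B))) →ₗ[Λ] S,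
          Function.Surjective f :=
  stmt7_general k G Λ hroot ι L R hTri B hB εL εR hLnil hRnil hII_L hII_R χB hχB_G hχB_R
end

section
/- Let p = char k > 0 and let q ∈ kˣ have order m₀, with m = pᵉ·m₀ for some e ≥ 0. Then in the braided tensor algebra T(kv) with braiding v ⊗ v ↦ q v ⊗ v, the element vᵐ is primitive. Hence k[v]/(vᵐ) is a finite-dimensional pre-Nichols algebra of dimension m. -/
/-!
Expand `(x + y)ⁿ` by the noncommutative `q`-binomial theorem. The Gaussian coefficients satisfy
`(1 - q^(i+1)) [n, i+1]_q = (1 - q^(n-i)) [n, i]_q`; for `n = m₀ = orderOf q` and `i = 0` the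
right side is `1 - q^m₀ = 0`, and then inductively every `[m₀, i]_q` with `0 < i < m₀` vanishes,
since `1 - q^i ≠ 0` there. Thus `(x + y)^m₀ = x^m₀ + y^m₀`; these two powers commute because
`q^m₀ = 1`, and the Frobenius of characteristic `p` takes care of the remaining factor `pᵉ`.
-/

open Finset

/-- The Gaussian binomial coefficient `[n, i]_q`. -/
def qChoose {R : Type*} [CommSemiring R] (q : R) : ℕ → ℕ → R
  | _, 0 => 1
  | 0, _ + 1 => 0
  | n + 1, i + 1 => qChoose q n i + q ^ (i + 1) * qChoose q n (i + 1)

section Semiring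

variable {R : Type*} [CommSemiring R] (q : R)

@[simp]
theorem qChoose_zero_right (n : ℕ) : qChoose q n 0 = 1 := by
  cases n <;> rfl

theorem qChoose_succ_succ (n i : ℕ) :
    qChoose q (n + 1) (i + 1) = qChoose q n i + q ^ (i + 1) * qChoose q n (i + 1) :=
  rfl

theorem qChoose_eq_zero_of_lt {n i : ℕ} (h : n < i) : qChoose q n i = 0 := by
  induction n generalizing i with
  | zero => obtain ⟨j, rfl⟩ := Nat.exists_eq_add_one_of_ne_zero (by omega : i ≠ 0); rfl
  | succ n ih =>
    obtain ⟨j, rfl⟩ := Nat.exists_eq_add_one_of_ne_zero (by omega : i ≠ 0)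
    rw [qChoose_succ_succ, ih (by omega), ih (by omega), mul_zero, add_zero]

@[simp]
theorem qChoose_self (n : ℕ) : qChoose q n n = 1 := by
  induction n with
  | zero => rfl
  | succ n ih => rw [qChoose_succ_succ, ih, qChoose_eq_zero_of_lt q n.lt_succ_self, mul_zero,
      add_zero]

end Semiring

section Ring

variable {R : Type*} [CommRing R] (q : R)

theorem one_sub_pow_mul_qChoose_succ (n i : ℕ) :
    (1 - q ^ (i + 1)) * qChoose q n (i + 1) = (1 - q ^ (n - i)) * qChoose q n i := by
  induction n generalizing i with
  | zero =>
    cases i <;> simp [qChoose]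
  | succ n ih =>
    cases i with
    | zero =>
      have := ih 0
      simp only [qChoose_succ_succ, qChoose_zero_right, Nat.sub_zero] at this ⊢
      linear_combination q * this
    | succ j =>
      rcases le_or_gt n j with hnj | hjn
      · rw [qChoose_eq_zero_of_lt q (by omega : n + 1 < j + 2), Nat.sub_eq_zero_of_le (by omega)]
        ring
      · obtain ⟨d, rfl⟩ := Nat.exists_eq_add_of_lt hjn
        have h₁ := ih j
        have h₂ := ih (j + 1)
        rw [show j + d + 1 - j = d + 1 by omega] at h₁
        rw [show j + d + 1 - (j + 1) = d by omega] at h₂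
        rw [show j + d + 1 + 1 - (j + 1) = d + 1 by omega, qChoose_succ_succ q (j + d + 1) j,
          qChoose_succ_succ q (j + d + 1) (j + 1)]
        linear_combination q ^ (j + 2) * h₂ + h₁

theorem qChoose_orderOf_eq_zero [NoZeroDivisors R] {i : ℕ} (hi₀ : 0 < i) (hi : i < orderOf q) :
    qChoose q (orderOf q) i = 0 := by
  induction i with
  | zero => omega
  | succ j ih =>
    have hrhs : (1 - q ^ (orderOf q - j)) * qChoose q (orderOf q) j = 0 := by
      rcases Nat.eq_zero_or_pos j with rfl | hj
      · simp [pow_orderOf_eq_one]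
      · rw [ih hj (by omega), mul_zero]
    have hne : 1 - q ^ (j + 1) ≠ 0 :=
      sub_ne_zero.mpr (pow_ne_one_of_lt_orderOf j.succ_ne_zero hi).symm
    rw [← one_sub_pow_mul_qChoose_succ] at hrhs
    exact (mul_eq_zero.mp hrhs).resolve_left hne

end Ring

section QCommuting

variable {R A : Type*} [CommSemiring R] [Semiring A] [Algebra R A] {q : R} {x y : A}

theorem mul_pow_of_mul_eq_smul (h : y * x = q • (x * y)) (i : ℕ) :
    y * x ^ i = q ^ i • (x ^ i * y) := by
  induction i with
  | zero => simp
  | succ i ih =>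
    rw [pow_succ, ← mul_assoc, ih, smul_mul_assoc, mul_assoc, h, mul_smul_comm, smul_smul,
      ← mul_assoc, ← pow_succ, ← pow_succ]

theorem add_pow_eq_sum_qChoose (h : y * x = q • (x * y)) (n : ℕ) :
    (x + y) ^ n = ∑ i ∈ range (n + 1), qChoose q n i • (x ^ i * y ^ (n - i)) := by
  induction n with
  | zero => simp
  | succ n ih =>
    have hx : x * (x + y) ^ n =
        ∑ i ∈ range (n + 1), qChoose q n i • (x ^ (i + 1) * y ^ (n + 1 - (i + 1))) := by
      rw [ih, mul_sum]
      refine sum_congr rfl fun i _ => ?_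
      rw [mul_smul_comm, ← mul_assoc, ← pow_succ', Nat.add_sub_add_right]
    -- the extra term `i = n + 1` vanishes, and makes room for the index shift below
    have hy : y * (x + y) ^ n =
        ∑ i ∈ range (n + 2), (q ^ i * qChoose q n i) • (x ^ i * y ^ (n + 1 - i)) := by
      rw [sum_range_succ, qChoose_eq_zero_of_lt q n.lt_succ_self, mul_zero, zero_smul, add_zero,
        ih, mul_sum]
      refine sum_congr rfl fun i hi => ?_
      rw [mul_smul_comm, ← mul_assoc, mul_pow_of_mul_eq_smul h, smul_mul_assoc, smul_smul,
        mul_assoc, ← pow_succ', mul_comm (qChoose q n i),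
        Nat.sub_add_comm (Nat.lt_succ_iff.mp (mem_range.mp hi))]
    rw [pow_succ', add_mul, hx, hy, sum_range_succ' _ (n + 1), sum_range_succ' _ (n + 1)]
    simp only [qChoose_succ_succ, add_smul, sum_add_distrib, qChoose_zero_right, pow_zero,
      mul_one]
    abel

theorem commute_pow_orderOf_of_mul_eq_smul (h : y * x = q • (x * y)) :
    Commute (x ^ orderOf q) (y ^ orderOf q) := by
  have hy : Commute (x ^ orderOf q) y := by
    rw [Commute, SemiconjBy, mul_pow_of_mul_eq_smul h, pow_orderOf_eq_one, one_smul]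
  exact hy.pow_right _

end QCommuting

theorem add_pow_orderOf_of_mul_eq_smul {R A : Type*} [CommRing R] [NoZeroDivisors R] [Semiring A]
    [Algebra R A] {q : R} {x y : A} (h : y * x = q • (x * y)) (hq : 0 < orderOf q) :
    (x + y) ^ orderOf q = x ^ orderOf q + y ^ orderOf q := by
  rw [add_pow_eq_sum_qChoose h, sum_range_succ, sum_eq_single_of_mem 0 (mem_range.mpr hq)]
  · simp [add_comm]
  · intro i hi hi₀
    rw [qChoose_orderOf_eq_zero q (Nat.pos_of_ne_zero hi₀) (mem_range.mp hi), zero_smul]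

theorem add_pow_pow_mul_orderOf_of_mul_eq_smul {k A : Type*} [Field k] [Ring A] [Algebra k A]
    (p : ℕ) [Fact p.Prime] [CharP k p] {q : k} {x y : A} (h : y * x = q • (x * y))
    (hq : 0 < orderOf q) (e : ℕ) :
    (x + y) ^ (p ^ e * orderOf q) = x ^ (p ^ e * orderOf q) + y ^ (p ^ e * orderOf q) := by
  rcases subsingleton_or_nontrivial A with _ | _
  · exact Subsingleton.elim _ _
  have : CharP A p := charP_of_injective_algebraMap (algebraMap k A).injective p
  rw [mul_comm, pow_mul, pow_mul, pow_mul, add_pow_orderOf_of_mul_eq_smul h hq,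
    add_pow_char_pow_of_commute p e (commute_pow_orderOf_of_mul_eq_smul h)]

theorem stmt14_general (k A : Type) [Field k] [Ring A] [Algebra k A]
    (p : ℕ) [hp : Fact p.Prime] [CharP k p]
    (q : k) (m₀ : ℕ) (hord : orderOf q = m₀) (hm₀ : 0 < m₀)
    (e : ℕ) (m : ℕ) (hm : m = p ^ e * m₀)
    (x y : A) (hcomm : y * x = q • (x * y)) :
    (x + y) ^ m = x ^ m + y ^ m ∧
    Module.finrank k
      (Polynomial k ⧸ Ideal.span {(Polynomial.X : Polynomial k) ^ m}) = m := by
  subst hord hm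
  exact ⟨add_pow_pow_mul_orderOf_of_mul_eq_smul p hcomm hm₀ e,
    by rw [finrank_quotient_span_eq_natDegree, Polynomial.natDegree_X_pow]⟩

/-- In characteristic `p > 0`, if `q ∈ kˣ` has multiplicative order `m₀` and
`m = pᵉ·m₀`, then in the braided tensor algebra `T(kv)` with braiding `v ⊗ v ↦ q v ⊗ v`
the element `vᵐ` is primitive — abstractly, `q`-commuting elements `x = v ⊗ 1`,
`y = 1 ⊗ v` satisfy `(x+y)ᵐ = xᵐ + yᵐ` — and hence `k[v]/(vᵐ)` is a finite-dimensional
pre-Nichols algebra of dimension `m`. -/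
theorem stmt14 (k A : Type) [Field k] [Ring A] [Algebra k A]
    (p : ℕ) [hp : Fact p.Prime] [CharP k p]
    (q : k) (hq : q ≠ 0) (m₀ : ℕ) (hord : orderOf q = m₀) (hm₀ : 0 < m₀)
    (e : ℕ) (m : ℕ) (hm : m = p ^ e * m₀)
    (x y : A) (hcomm : y * x = q • (x * y)) :
    (x + y) ^ m = x ^ m + y ^ m ∧
    Module.finrank k
      (Polynomial k ⧸ Ideal.span {(Polynomial.X : Polynomial k) ^ m}) = m :=
  stmt14_general k A p (hp := hp) q m₀ hord hm₀ e m hm x y hcomm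
end
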